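/- Let V be a finite set, T ≥ 1, and for each t ∈ {1,…,T} let p_t^u, p_t^r be probability mass functions on V with mixture p_t^d = α·p_t^r + (1−α)·p_t^u for a fixed α ∈ (0,1). Fix u = (u_1,…,u_T) ∈ V^T and γ ∈ (0,1] with min{p_t^u(u_t), p_t^r(u_t)} ≥ γ for all t. Then |(1/T)·Σ_t log p_t^u(u_t) − (1/T)·Σ_t log p_t^r(u_t)| ≤ (2√2/(γ(1−α)))·√((1/T)·Σ_t JS(p_t^d, p_t^r)). -/

import Mathlib

open Finset

/-- Kullback–Leibler divergence (natural log). -/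
noncomputable def KL {V : Type*} [Fintype V] (p q : V → ℝ) : ℝ :=
  ∑ x, p x * Real.log (p x / q x)

/-- Jensen–Shannon divergence. -/
noncomputable def JS {V : Type*} [Fintype V] (p q : V → ℝ) : ℝ :=
  (1 / 2) * KL p (fun x => (p x + q x) / 2) + (1 / 2) * KL q (fun x => (p x + q x) / 2)

/-!
Since `log` is `1/γ`-Lipschitz on `[γ, ∞)`, each summand of the gap is at most
`|p_t^u(u_t) - p_t^r(u_t)| / γ`. As `p^d - p^r = (1 - α)(p^u - p^r)`, it suffices to bound a single
coordinate of `p^d - p^r` by the Jensen–Shannon divergence. Pointwise,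
`(a - b)² / (2(a + b)) ≤ a log (2a / (a + b)) + b log (2b / (a + b))`, which after the substitution
`a, b = s(1 ± x)/2` is the inequality `x² ≤ (1 + x) log (1 + x) + (1 - x) log (1 - x)`; with
`a, b ≤ 1` this gives `|p(v) - q(v)| ≤ 2√2 √JS(p, q)`. Averaging over `t` and concavity of `√`
(Cauchy–Schwarz) conclude.
-/

open Real

theorem two_mul_le_log_one_add_sub_log_one_sub {x : ℝ} (hx0 : 0 ≤ x) (hx1 : x < 1) :
    2 * x ≤ log (1 + x) - log (1 - x) := by
  have hsum := hasSum_log_sub_log_of_abs_lt_one (abs_lt.2 ⟨by linarith, hx1⟩)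
  simpa using le_hasSum hsum 0 fun k _ => by positivity

theorem sq_le_mul_log_one_add_add_mul_log_one_sub {x : ℝ} (hx : x ∈ Set.Icc (-1 : ℝ) 1) :
    x ^ 2 ≤ (1 + x) * log (1 + x) + (1 - x) * log (1 - x) := by
  wlog hx0 : 0 ≤ x generalizing x
  · have := this (x := -x) ⟨by linarith [hx.2], by linarith [hx.1]⟩ (by linarith)
    rw [neg_sq, ← sub_eq_add_neg, sub_neg_eq_add] at this
    linarith
  set f : ℝ → ℝ := fun y => (1 + y) * log (1 + y) + (1 - y) * log (1 - y) - y ^ 2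
  have hderiv : ∀ y ∈ Set.Ioo (0 : ℝ) 1,
      HasDerivAt f (log (1 + y) - log (1 - y) - 2 * y) y := by
    intro y ⟨hy0, hy1⟩
    have h₁ := (hasDerivAt_mul_log (x := 1 + y) (by linarith)).comp y
      ((hasDerivAt_id y).const_add 1)
    have h₂ := (hasDerivAt_mul_log (x := 1 - y) (by linarith)).comp y
      ((hasDerivAt_id y).const_sub 1)
    exact ((h₁.add h₂).sub (hasDerivAt_pow 2 y)).congr_deriv (by push_cast; ring)
  have hmono : MonotoneOn f (Set.Icc 0 1) := by
    refine monotoneOn_of_deriv_nonneg (convex_Icc 0 1) (by fun_prop) ?_ ?_ <;> rw [interior_Icc]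
    · exact fun y hy => (hderiv y hy).differentiableAt.differentiableWithinAt
    · intro y hy
      rw [(hderiv y hy).deriv]
      linarith [two_mul_le_log_one_add_sub_log_one_sub hy.1.le hy.2]
  have := hmono ⟨le_rfl, zero_le_one⟩ ⟨hx0, hx.2⟩ hx0
  simpa [f] using this

theorem sq_sub_div_le_mul_log_add_mul_log {a b : ℝ} (ha : 0 ≤ a) (hb : 0 ≤ b) :
    (a - b) ^ 2 / (2 * (a + b)) ≤
      a * log (a / ((a + b) / 2)) + b * log (b / ((a + b) / 2)) := by
  rcases (add_nonneg ha hb).eq_or_lt with hs | hs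
  · obtain ⟨rfl, rfl⟩ : a = 0 ∧ b = 0 := ⟨by linarith, by linarith⟩
    simp
  set s := a + b with hs_def
  set x := (a - b) / s with hx_def
  have hsx : s * x = a - b := by rw [hx_def]; field_simp
  have hx : x ∈ Set.Icc (-1 : ℝ) 1 := by
    constructor
    · rw [le_div_iff₀ hs]; linarith
    · rw [div_le_one hs]; linarith
  have ha' : a = s / 2 * (1 + x) := by linarith
  have hb' : b = s / 2 * (1 - x) := by linarith
  have hs2 : s / 2 ≠ 0 := by positivity
  calc (a - b) ^ 2 / (2 * s) = s / 2 * x ^ 2 := by rw [← hsx]; field_simp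
    _ ≤ s / 2 * ((1 + x) * log (1 + x) + (1 - x) * log (1 - x)) := by
      gcongr; exact sq_le_mul_log_one_add_add_mul_log_one_sub hx
    _ = a * log (a / (s / 2)) + b * log (b / (s / 2)) := by
      rw [ha', hb', mul_div_cancel_left₀ _ hs2, mul_div_cancel_left₀ _ hs2]
      ring

theorem mul_log_add_mul_log_nonneg {a b : ℝ} (ha : 0 ≤ a) (hb : 0 ≤ b) :
    0 ≤ a * log (a / ((a + b) / 2)) + b * log (b / ((a + b) / 2)) := by
  have := add_nonneg ha hb
  exact (by positivity : (0 : ℝ) ≤ _).trans (sq_sub_div_le_mul_log_add_mul_log ha hb)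

theorem abs_log_sub_log_le {a b γ : ℝ} (hγ : 0 < γ) (ha : γ ≤ a) (hb : γ ≤ b) :
    |log a - log b| ≤ |a - b| / γ := by
  have key : ∀ x y, γ ≤ x → γ ≤ y → log x - log y ≤ |x - y| / γ := fun x y hx hy =>
    have hx0 : 0 < x := hγ.trans_le hx
    have hy0 : 0 < y := hγ.trans_le hy
    calc log x - log y = log (x / y) := (log_div hx0.ne' hy0.ne').symm
      _ ≤ x / y - 1 := log_le_sub_one_of_pos (by positivity)
      _ = (x - y) / y := by field_simp
      _ ≤ |x - y| / y := by gcongr; exact le_abs_self _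
      _ ≤ |x - y| / γ := by gcongr
  exact abs_sub_le_iff.2 ⟨key a b ha hb, abs_sub_comm b a ▸ key b a hb ha⟩

theorem mixture_nonneg {V : Type*} {p q : V → ℝ} {α : ℝ} (hα0 : 0 ≤ α) (hα1 : α ≤ 1)
    (hp : ∀ x, 0 ≤ p x) (hq : ∀ x, 0 ≤ q x) (x : V) : 0 ≤ α * q x + (1 - α) * p x := by
  have := hp x; have := hq x; have : 0 ≤ 1 - α := by linarith
  positivity

section Divergence

variable {V : Type*} [Fintype V] {p q : V → ℝ}

theorem two_mul_JS_eq_sum (p q : V → ℝ) :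
    2 * JS p q = ∑ x, (p x * log (p x / ((p x + q x) / 2)) +
      q x * log (q x / ((p x + q x) / 2))) := by
  rw [JS, KL, KL, sum_add_distrib]; ring

theorem JS_nonneg (hp : ∀ x, 0 ≤ p x) (hq : ∀ x, 0 ≤ q x) : 0 ≤ JS p q := by
  have := two_mul_JS_eq_sum p q ▸
    sum_nonneg fun x _ => mul_log_add_mul_log_nonneg (hp x) (hq x)
  linarith

theorem sq_sub_apply_div_le_two_mul_JS (hp : ∀ x, 0 ≤ p x) (hq : ∀ x, 0 ≤ q x) (v : V) :
    (p v - q v) ^ 2 / (2 * (p v + q v)) ≤ 2 * JS p q := by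
  rw [two_mul_JS_eq_sum]
  exact (sq_sub_div_le_mul_log_add_mul_log (hp v) (hq v)).trans
    (single_le_sum (fun x _ => mul_log_add_mul_log_nonneg (hp x) (hq x)) (mem_univ v))

theorem abs_sub_apply_le_sqrt_JS (hp : ∀ x, 0 ≤ p x) (hq : ∀ x, 0 ≤ q x)
    (hp1 : ∑ x, p x = 1) (hq1 : ∑ x, q x = 1) (v : V) :
    |p v - q v| ≤ 2 * √2 * √(JS p q) := by
  have hpv : p v ≤ 1 := hp1 ▸ single_le_sum (fun x _ => hp x) (mem_univ v)
  have hqv : q v ≤ 1 := hq1 ▸ single_le_sum (fun x _ => hq x) (mem_univ v)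
  have hJS := JS_nonneg hp hq
  have h8 : (p v - q v) ^ 2 ≤ 8 * JS p q := by
    rcases (add_nonneg (hp v) (hq v)).eq_or_lt with hs | hs
    · nlinarith [hp v, hq v]
    · have := sq_sub_apply_div_le_two_mul_JS hp hq v
      rw [div_le_iff₀ (by positivity)] at this
      nlinarith
  calc |p v - q v| ≤ √(8 * JS p q) := abs_le_sqrt h8
    _ = 2 * √2 * √(JS p q) := by
      rw [sqrt_mul (by norm_num), show (8 : ℝ) = 2 ^ 2 * 2 by norm_num, sqrt_mul (by norm_num),
        sqrt_sq (by norm_num)]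

theorem abs_sub_apply_le_sqrt_JS_mixture {α : ℝ} (hα0 : 0 ≤ α) (hα1 : α < 1)
    (hp : ∀ x, 0 ≤ p x) (hq : ∀ x, 0 ≤ q x) (hp1 : ∑ x, p x = 1) (hq1 : ∑ x, q x = 1)
    (v : V) :
    |p v - q v| ≤ 2 * √2 / (1 - α) * √(JS (fun x => α * q x + (1 - α) * p x) q) := by
  have h1α : 0 < 1 - α := by linarith
  have hm1 : ∑ x, (α * q x + (1 - α) * p x) = 1 := by
    rw [sum_add_distrib, ← mul_sum, ← mul_sum, hp1, hq1]; ring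
  have := abs_sub_apply_le_sqrt_JS (mixture_nonneg hα0 hα1.le hp hq) hq hm1 hq1 v
  rw [show α * q v + (1 - α) * p v - q v = (1 - α) * (p v - q v) by ring, abs_mul,
    abs_of_pos h1α] at this
  rw [div_mul_eq_mul_div, le_div_iff₀ h1α]
  linarith

theorem abs_log_sub_log_le_sqrt_JS_mixture {α γ : ℝ} (hα0 : 0 ≤ α) (hα1 : α < 1) (hγ : 0 < γ)
    (hp : ∀ x, 0 ≤ p x) (hq : ∀ x, 0 ≤ q x) (hp1 : ∑ x, p x = 1) (hq1 : ∑ x, q x = 1)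
    {v : V} (hpv : γ ≤ p v) (hqv : γ ≤ q v) :
    |log (p v) - log (q v)| ≤
      2 * √2 / (γ * (1 - α)) * √(JS (fun x => α * q x + (1 - α) * p x) q) :=
  calc _ ≤ |p v - q v| / γ := abs_log_sub_log_le hγ hpv hqv
    _ ≤ 2 * √2 / (1 - α) * √(JS (fun x => α * q x + (1 - α) * p x) q) / γ := by
      gcongr
      exact abs_sub_apply_le_sqrt_JS_mixture hα0 hα1 hp hq hp1 hq1 v
    _ = _ := by rw [mul_comm γ, ← div_div]; ring

end Divergence

theorem inv_card_mul_sum_sqrt_le_sqrt {ι : Type*} (s : Finset ι) {f : ι → ℝ}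
    (hf : ∀ i ∈ s, 0 ≤ f i) :
    1 / (#s : ℝ) * ∑ i ∈ s, √(f i) ≤ √(1 / (#s : ℝ) * ∑ i ∈ s, f i) := by
  have hcs := sq_sum_le_card_mul_sum_sq (s := s) (f := fun i => √(f i))
  rw [sum_congr rfl fun i hi => sq_sqrt (hf i hi)] at hcs
  refine (le_abs_self _).trans (abs_le_sqrt ?_)
  calc (1 / (#s : ℝ) * ∑ i ∈ s, √(f i)) ^ 2
      ≤ (1 / (#s : ℝ)) ^ 2 * (#s * ∑ i ∈ s, f i) := by rw [mul_pow]; gcongr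
    _ = 1 / (#s : ℝ) * ∑ i ∈ s, f i := by
      rcases eq_or_ne (#s : ℝ) 0 with h | h
      · simp [h]
      · field_simp

theorem self_perplexity_gap_general {V : Type*} [Fintype V] (T : ℕ)
    (pu pr : Fin T → V → ℝ) (α : ℝ) (hα : α ∈ Set.Ioo (0 : ℝ) 1)
    (hpu0 : ∀ t x, 0 ≤ pu t x) (hpr0 : ∀ t x, 0 ≤ pr t x)
    (hpu1 : ∀ t, ∑ x, pu t x = 1) (hpr1 : ∀ t, ∑ x, pr t x = 1)
    (u : Fin T → V) (γ : ℝ) (hγ : γ ∈ Set.Ioc (0 : ℝ) 1)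
    (hmin : ∀ t, γ ≤ min (pu t (u t)) (pr t (u t))) :
    |(1 / (T : ℝ)) * ∑ t, Real.log (pu t (u t)) -
        (1 / (T : ℝ)) * ∑ t, Real.log (pr t (u t))| ≤
      (2 * Real.sqrt 2 / (γ * (1 - α))) *
        Real.sqrt ((1 / (T : ℝ)) *
          ∑ t, JS (fun x => α * pr t x + (1 - α) * pu t x) (pr t)) := by
  obtain ⟨hα0, hα1⟩ := hα
  obtain ⟨hγ0, -⟩ := hγ
  set J : Fin T → ℝ := fun t => JS (fun x => α * pr t x + (1 - α) * pu t x) (pr t)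
  set C := 2 * √2 / (γ * (1 - α))
  have hJ : ∀ t ∈ univ, 0 ≤ J t := fun t _ =>
    JS_nonneg (mixture_nonneg hα0.le hα1.le (hpu0 t) (hpr0 t)) (hpr0 t)
  have hstep : ∀ t, |log (pu t (u t)) - log (pr t (u t))| ≤ C * √(J t) := fun t =>
    abs_log_sub_log_le_sqrt_JS_mixture hα0.le hα1 hγ0 (hpu0 t) (hpr0 t) (hpu1 t) (hpr1 t)
      ((hmin t).trans (min_le_left _ _)) ((hmin t).trans (min_le_right _ _))
  calc _ = 1 / (T : ℝ) * |∑ t, (log (pu t (u t)) - log (pr t (u t)))| := by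
        rw [← mul_sub, ← sum_sub_distrib, abs_mul, abs_of_nonneg (by positivity)]
    _ ≤ 1 / (T : ℝ) * ∑ t, C * √(J t) := by
        gcongr
        exact (abs_sum_le_sum_abs _ _).trans (sum_le_sum fun t _ => hstep t)
    _ = C * (1 / (T : ℝ) * ∑ t, √(J t)) := by rw [← mul_sum]; ring
    _ ≤ C * √(1 / (T : ℝ) * ∑ t, J t) := by
        have := inv_card_mul_sum_sqrt_le_sqrt univ hJ
        rw [card_fin] at this
        gcongr

/-- MarI controls the self-perplexity gap (Theorem: self-perplexity gap). -/
theorem self_perplexity_gap {V : Type*} [Fintype V] (T : ℕ) (hT : 1 ≤ T)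
    (pu pr : Fin T → V → ℝ) (α : ℝ) (hα : α ∈ Set.Ioo (0 : ℝ) 1)
    (hpu0 : ∀ t x, 0 ≤ pu t x) (hpr0 : ∀ t x, 0 ≤ pr t x)
    (hpu1 : ∀ t, ∑ x, pu t x = 1) (hpr1 : ∀ t, ∑ x, pr t x = 1)
    (u : Fin T → V) (γ : ℝ) (hγ : γ ∈ Set.Ioc (0 : ℝ) 1)
    (hmin : ∀ t, γ ≤ min (pu t (u t)) (pr t (u t))) :
    |(1 / (T : ℝ)) * ∑ t, Real.log (pu t (u t)) -
        (1 / (T : ℝ)) * ∑ t, Real.log (pr t (u t))| ≤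
      (2 * Real.sqrt 2 / (γ * (1 - α))) *
        Real.sqrt ((1 / (T : ℝ)) *
          ∑ t, JS (fun x => α * pr t x + (1 - α) * pu t x) (pr t)) :=
  self_perplexity_gap_general T pu pr α hα hpu0 hpr0 hpu1 hpr1 u γ hγ hmin
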